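/- arXiv:1009.2674 — 4 statements merged into one kernel-verified Lean document; each statement's English description precedes it below -/
import Mathlib

section
/- Let $k: (0,\infty) \to \mathbb{R}$ be $C^2$, with $k(r) = \mathcal{O}(r^{2-d/\gamma})$ as $r \to 0$ (where $1 < \gamma < d/2$, so $2 - d/\gamma < 0$), $k'' $ monotone near the origin, and $k'(\delta)$ finite for some $\delta > 0$. Then it cannot hold that $r^{-d/\gamma} = o(k''(r))$ as $r \to 0$; i.e., $k''(r) = \mathcal{O}(r^{-d/\gamma})$ as $r \to 0$. -/
/-!
If `k''` is increasing near `0`, then on `[s/4, 3s/4]` it is at most `k''(s)`, so the concavity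
of `k - k''(s) t² / 2` there gives `k(s/4) - 2 k(s/2) + k(3s/4) ≤ k''(s) s² / 16`. The left side
is `O(s^{2-α})` (with `α = d/γ`) because `k` is, hence `k''(s) ≥ -C s^{-α}`; from above, `k''` is
bounded by its value at `δ/2`. An antitone `k''` is reduced to this case by replacing `k` by `-k`.
-/

open Filter Set Asymptotics Topology

theorem Asymptotics.IsBigO.of_le_of_le {α : Type*} {l : Filter α} {f L U g : α → ℝ}
    (hL : L =O[l] g) (hU : U =O[l] g) (hLf : ∀ᶠ x in l, L x ≤ f x)
    (hfU : ∀ᶠ x in l, f x ≤ U x) : f =O[l] g := by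
  refine IsBigO.trans (IsBigO.of_bound 1 ?_) (hL.norm_left.add hU.norm_left)
  filter_upwards [hLf, hfU] with x hLx hUx
  simp only [Real.norm_eq_abs, one_mul]
  rw [abs_of_nonneg (by positivity : 0 ≤ |L x| + |U x|)]
  exact abs_le.2 ⟨by linarith [neg_abs_le (L x), abs_nonneg (U x)],
    by linarith [le_abs_self (U x), abs_nonneg (L x)]⟩

theorem sub_two_mul_add_le_of_deriv_deriv_le {f : ℝ → ℝ} {x h M : ℝ} (hh : 0 ≤ h)
    (hf : DifferentiableOn ℝ f (Icc (x - h) (x + h)))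
    (hf' : DifferentiableOn ℝ (deriv f) (Ioo (x - h) (x + h)))
    (hM : ∀ t ∈ Ioo (x - h) (x + h), deriv (deriv f) t ≤ M) :
    f (x - h) - 2 * f x + f (x + h) ≤ M * h ^ 2 := by
  set g : ℝ → ℝ := fun t => f t - M / 2 * t ^ 2
  have hfa : ∀ t ∈ Ioo (x - h) (x + h), DifferentiableAt ℝ f t := fun t ht =>
    (hf.mono Ioo_subset_Icc_self).differentiableAt (Ioo_mem_nhds ht.1 ht.2)
  have hg' : EqOn (deriv g) (fun t => deriv f t - M * t) (Ioo (x - h) (x + h)) := by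
    intro t ht
    rw [((hfa t ht).hasDerivAt.fun_sub ((hasDerivAt_pow 2 t).const_mul (M / 2))).deriv]
    ring
  have hanti : AntitoneOn (fun t => deriv f t - M * t) (Ioo (x - h) (x + h)) := by
    have hdiff : DifferentiableOn ℝ (fun t => deriv f t - M * t) (Ioo (x - h) (x + h)) :=
      hf'.sub (by fun_prop)
    refine antitoneOn_of_deriv_nonpos (convex_Ioo _ _) hdiff.continuousOn
      (by rwa [interior_Ioo]) fun t ht => ?_
    rw [interior_Ioo] at ht
    rw [deriv_fun_sub (hf'.differentiableAt (Ioo_mem_nhds ht.1 ht.2)) (by fun_prop)]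
    simpa using hM t ht
  have hconc : ConcaveOn ℝ (Icc (x - h) (x + h)) g := by
    refine AntitoneOn.concaveOn_of_deriv (convex_Icc _ _) ?_ ?_ ?_
    · exact (hf.sub (by fun_prop)).continuousOn
    · rw [interior_Icc]; exact (hf.mono Ioo_subset_Icc_self).sub (by fun_prop)
    · rw [interior_Icc]; exact hanti.congr hg'.symm
  have hmid := hconc.2 ⟨le_rfl, by linarith⟩ ⟨by linarith, le_rfl⟩
    (by norm_num : (0 : ℝ) ≤ 1 / 2) (by norm_num : (0 : ℝ) ≤ 1 / 2) (by norm_num)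
  have hx : (1 / 2 : ℝ) • (x - h) + (1 / 2 : ℝ) • (x + h) = x := by
    simp only [smul_eq_mul]; ring
  rw [hx] at hmid
  simp only [g, smul_eq_mul] at hmid
  nlinarith

theorem Asymptotics.IsBigO.comp_const_mul_rpow {f : ℝ → ℝ} {β c : ℝ} (hc : 0 < c)
    (hf : f =O[𝓝[>] 0] fun r => r ^ β) :
    (fun s => f (c * s)) =O[𝓝[>] 0] fun r => r ^ β := by
  have hlim : Tendsto (fun s => c * s) (𝓝[>] 0) (𝓝[>] 0) := by
    refine tendsto_nhdsWithin_iff.2 ⟨?_, ?_⟩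
    · exact ((continuous_const_mul c).tendsto' 0 0 (mul_zero c)).mono_left nhdsWithin_le_nhds
    · filter_upwards [self_mem_nhdsWithin] with s hs using mul_pos hc hs
  refine (hf.comp_tendsto hlim).trans (IsBigO.of_bound (c ^ β) ?_)
  filter_upwards [self_mem_nhdsWithin] with s hs
  simp only [Function.comp_apply, Real.mul_rpow hc.le (le_of_lt hs), norm_mul,
    Real.norm_of_nonneg (Real.rpow_nonneg hc.le β), le_refl]

theorem Asymptotics.IsBigO.div_sq_rpow {f : ℝ → ℝ} {β : ℝ}
    (hf : f =O[𝓝[>] 0] fun r => r ^ β) :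
    (fun s => f s / s ^ 2) =O[𝓝[>] 0] fun r => r ^ (β - 2) := by
  refine (hf.mul (isBigO_refl (fun s : ℝ => (s ^ 2)⁻¹) _)).congr' ?_ ?_
  · exact Eventually.of_forall fun s => (div_eq_mul_inv _ _).symm
  · filter_upwards [self_mem_nhdsWithin] with s hs
    rw [Real.rpow_sub hs, Real.rpow_two, div_eq_mul_inv]

theorem isBigO_const_rpow_neg {α : ℝ} (hα : 0 ≤ α) (c : ℝ) :
    (fun _ => c) =O[𝓝[>] 0] fun r : ℝ => r ^ (-α) := by
  refine IsBigO.of_bound |c| ?_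
  filter_upwards [Ioo_mem_nhdsGT (zero_lt_one' ℝ)] with s hs
  rw [Real.norm_eq_abs, Real.norm_of_nonneg (Real.rpow_nonneg hs.1.le _)]
  exact le_mul_of_one_le_right (abs_nonneg c)
    (Real.one_le_rpow_of_pos_of_le_one_of_nonpos hs.1 hs.2.le (neg_nonpos.2 hα))

theorem deriv_deriv_isBigO_rpow_of_monotoneOn {k : ℝ → ℝ} {α δ : ℝ} (hα : 0 ≤ α)
    (hδ : 0 < δ) (hk : ContDiffOn ℝ 2 k (Ioi 0)) (hO : k =O[𝓝[>] 0] fun r => r ^ (2 - α))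
    (hm : MonotoneOn (deriv (deriv k)) (Ioo 0 δ)) :
    deriv (deriv k) =O[𝓝[>] 0] fun r => r ^ (-α) := by
  have hk' : DifferentiableOn ℝ k (Ioi 0) := hk.differentiableOn (by norm_num)
  have hk'' : DifferentiableOn ℝ (deriv k) (Ioi 0) :=
    (hk.deriv_of_isOpen isOpen_Ioi (by norm_num)).differentiableOn one_ne_zero
  set D : ℝ → ℝ := fun s => k (1 / 4 * s) - 2 * k (1 / 2 * s) + k (3 / 4 * s)
  have hD : D =O[𝓝[>] 0] fun r => r ^ (2 - α) :=
    ((hO.comp_const_mul_rpow (by norm_num)).sub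
      ((hO.comp_const_mul_rpow (by norm_num)).const_mul_left 2)).add
      (hO.comp_const_mul_rpow (by norm_num))
  have hlower : ∀ᶠ s in 𝓝[>] 0, 16 * D s / s ^ 2 ≤ deriv (deriv k) s := by
    filter_upwards [Ioo_mem_nhdsGT hδ] with s ⟨hs0, hsδ⟩
    have hsub : Icc (1 / 4 * s) (3 / 4 * s) ⊆ Ioi 0 := fun t ht =>
      mem_Ioi.2 (by linarith [ht.1])
    have h := sub_two_mul_add_le_of_deriv_deriv_le (x := 1 / 2 * s) (h := 1 / 4 * s)
      (M := deriv (deriv k) s) (by linarith)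
      (by convert hk'.mono hsub using 2 <;> ring)
      (by convert hk''.mono (Ioo_subset_Icc_self.trans hsub) using 2 <;> ring)
      fun t ht => hm ⟨by linarith [ht.1], by linarith [ht.2]⟩ ⟨hs0, hsδ⟩ (by linarith [ht.2])
    rw [show 1 / 2 * s - 1 / 4 * s = 1 / 4 * s by ring,
      show 1 / 2 * s + 1 / 4 * s = 3 / 4 * s by ring] at h
    rw [div_le_iff₀ (by positivity)]
    linarith
  have hupper : ∀ᶠ s in 𝓝[>] 0, deriv (deriv k) s ≤ deriv (deriv k) (δ / 2) := by
    filter_upwards [Ioo_mem_nhdsGT (half_pos hδ)] with s hs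
    exact hm ⟨hs.1, by linarith [hs.2]⟩ ⟨half_pos hδ, by linarith⟩ hs.2.le
  have hLO : (fun s => 16 * D s / s ^ 2) =O[𝓝[>] 0] fun r => r ^ (-α) := by
    simpa using (hD.const_mul_left 16).div_sq_rpow
  exact hLO.of_le_of_le (isBigO_const_rpow_neg hα _) hlower hupper

theorem deriv_deriv_isBigO_rpow_of_antitoneOn {k : ℝ → ℝ} {α δ : ℝ} (hα : 0 ≤ α)
    (hδ : 0 < δ) (hk : ContDiffOn ℝ 2 k (Ioi 0)) (hO : k =O[𝓝[>] 0] fun r => r ^ (2 - α))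
    (ha : AntitoneOn (deriv (deriv k)) (Ioo 0 δ)) :
    deriv (deriv k) =O[𝓝[>] 0] fun r => r ^ (-α) := by
  have hneg : deriv (deriv fun x => -k x) = -deriv (deriv k) := by
    funext x; simp
  have h := deriv_deriv_isBigO_rpow_of_monotoneOn hα hδ hk.neg hO.neg_left
    (by rw [hneg]; exact ha.neg)
  rw [hneg] at h
  simpa using h.neg_left

theorem second_deriv_bigO_of_kernel_bigO_general {d : ℕ} (γ : ℝ) (hγ1 : 1 < γ)
    (k : ℝ → ℝ) (hk : ContDiffOn ℝ 2 k (Set.Ioi (0:ℝ)))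
    (hO : k =O[nhdsWithin 0 (Set.Ioi 0)] fun r : ℝ => r ^ (2 - (d:ℝ)/γ))
    (hmono : ∃ δ > (0:ℝ), MonotoneOn (deriv (deriv k)) (Set.Ioo 0 δ) ∨
      AntitoneOn (deriv (deriv k)) (Set.Ioo 0 δ)) :
    (deriv (deriv k)) =O[nhdsWithin 0 (Set.Ioi 0)] fun r : ℝ => r ^ (-(d:ℝ)/γ) := by
  have hα : 0 ≤ (d : ℝ) / γ := div_nonneg d.cast_nonneg (by linarith)
  rw [neg_div]
  obtain ⟨δ, hδ, hm | ha⟩ := hmono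
  · exact deriv_deriv_isBigO_rpow_of_monotoneOn hα hδ hk hO hm
  · exact deriv_deriv_isBigO_rpow_of_antitoneOn hα hδ hk hO ha

/-- If `k` is `C²` on `(0,∞)`, `k(r) = O(r^{2-d/γ})` as `r → 0⁺`
(with `1 < γ < d/2`), and `k''` is monotone near the origin, then it cannot hold that
`r^{-d/γ} = o(k''(r))`; i.e. `k''(r) = O(r^{-d/γ})` as `r → 0⁺`. -/
theorem second_deriv_bigO_of_kernel_bigO {d : ℕ} (γ : ℝ) (hγ1 : 1 < γ) (hγ2 : γ < (d:ℝ)/2)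
    (k : ℝ → ℝ) (hk : ContDiffOn ℝ 2 k (Set.Ioi (0:ℝ)))
    (hO : k =O[nhdsWithin 0 (Set.Ioi 0)] fun r : ℝ => r ^ (2 - (d:ℝ)/γ))
    (hmono : ∃ δ > (0:ℝ), MonotoneOn (deriv (deriv k)) (Set.Ioo 0 δ) ∨
      AntitoneOn (deriv (deriv k)) (Set.Ioo 0 δ))
    (δ₀ : ℝ) (hδ₀ : 0 < δ₀) (hdiff : DifferentiableAt ℝ k δ₀) :
    (deriv (deriv k)) =O[nhdsWithin 0 (Set.Ioi 0)] fun r : ℝ => r ^ (-(d:ℝ)/γ) :=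
  second_deriv_bigO_of_kernel_bigO_general γ hγ1 k hk hO hmono
end

section
/- Let $\hat{C} > 0$, $p \ge 2$, and let $\eta: [0,T] \to [0,\infty)$ be absolutely continuous with $\eta(0) = 0$ and $\eta'(t) \le \hat{C} p \max(\eta(t)^{1-1/p}, \eta(t))$ for a.e. $t$. Then $\eta(t) \le (\hat{C} t)^p$ for all $t \in [0, \min(T, 1/\hat{C})]$. Consequently, if $\eta$ satisfies this bound for every $p \ge 2$ (with the same $\hat{C}$), then $\eta(t) = 0$ for $t \in [0, \min(T, 1/(2\hat{C}))]$. -/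
/-!
The function `(C t)^p` solves `φ' = C p φ^(1 - 1/p)` and stays `≤ 1` up to `t = 1/C`; on
`[0, 1]` the branch `φ^(1 - 1/p)` of `max (φ^(1 - 1/p)) φ` is the larger one. Shifting it to `(C (t + ε))^p` makes it
start strictly above `η 0 = 0`, and a first-crossing argument shows that `η` never reaches it;
letting `ε → 0` gives `η t ≤ (C t)^p`. For `t ≤ 1/(2C)` this is at most `2^(-p)`, which
tends to `0` as `p → ∞`.
-/

open Set intervalIntegral MeasureTheory Filter Real

theorem image_lt_of_sub_le_integral_of_hasDerivAt {η g φ φ' : ℝ → ℝ} {a b : ℝ}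
    (hη : ContinuousOn η (Icc a b)) (hg : IntervalIntegrable g volume a b)
    (hφ : ∀ x ∈ Icc a b, HasDerivAt φ (φ' x) x) (hφ' : IntervalIntegrable φ' volume a b)
    (hineq : ∀ t ∈ Icc a b, η t - η a ≤ ∫ τ in a..t, g τ) (hstart : η a < φ a)
    (hbound : ∀ x ∈ Icc a b, η x < φ x → g x ≤ φ' x) :
    ∀ t ∈ Icc a b, η t < φ t := by
  by_contra! hbad
  have hφc : ContinuousOn φ (Icc a b) := fun x hx => (hφ x hx).continuousAt.continuousWithinAt
  have hclosed : IsClosed (Icc a b ∩ (fun t => φ t - η t) ⁻¹' Iic 0) :=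
    (hφc.sub hη).preimage_isClosed_of_isClosed isClosed_Icc isClosed_Iic
  -- `t₀` is the first time at which `η` reaches `φ`.
  obtain ⟨t₀, ⟨ht₀, hcross : φ t₀ - η t₀ ≤ 0⟩, hleast⟩ :=
    (isCompact_Icc.of_isClosed_subset hclosed inter_subset_left).exists_isLeast
      (by obtain ⟨t, ht, h⟩ := hbad; exact ⟨t, ht, sub_nonpos.2 h⟩)
  have hsub : uIcc a t₀ ⊆ uIcc a b := uIcc_subset_uIcc_left (Icc_subset_uIcc ht₀)
  have hbelow : ∀ x ∈ Ioo a t₀, g x ≤ φ' x := fun x hx =>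
    have hx' : x ∈ Icc a b := ⟨hx.1.le, hx.2.le.trans ht₀.2⟩
    hbound x hx' (by
      by_contra! h
      exact (hleast ⟨hx', sub_nonpos.2 h⟩).not_gt hx.2)
  have hreach : η t₀ - η a ≤ φ t₀ - φ a :=
    calc η t₀ - η a ≤ ∫ τ in a..t₀, g τ := hineq t₀ ht₀
      _ ≤ ∫ τ in a..t₀, φ' τ :=
        integral_mono_on_of_le_Ioo ht₀.1 (hg.mono_set hsub) (hφ'.mono_set hsub) hbelow
      _ = φ t₀ - φ a := integral_eq_sub_of_hasDerivAt
        (fun x hx => hφ x (Icc_subset_Icc_right ht₀.2 (uIcc_of_le ht₀.1 ▸ hx)))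
        (hφ'.mono_set hsub)
  linarith

theorem max_rpow_self_le_rpow {x y e : ℝ} (hx : 0 ≤ x) (hxy : x ≤ y) (hy : y ≤ 1)
    (he₀ : 0 ≤ e) (he₁ : e ≤ 1) : max (x ^ e) x ≤ y ^ e :=
  have hpow : x ^ e ≤ y ^ e := rpow_le_rpow hx hxy he₀
  max_le hpow ((self_le_rpow_of_le_one hx (hxy.trans hy) he₁).trans hpow)

section Osgood

variable {C T p : ℝ} {η : ℝ → ℝ}

theorem lt_mul_add_rpow_of_le_integral (hC : 0 < C) (hp : 1 ≤ p) {ε : ℝ} (hε : 0 < ε)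
    (hη : ContinuousOn η (Icc 0 T)) (hnonneg : ∀ t ∈ Icc 0 T, 0 ≤ η t)
    (hineq : ∀ t ∈ Icc 0 T, η t ≤ ∫ τ in 0..t, C * p * max (η τ ^ (1 - 1/p)) (η τ))
    {s : ℝ} (hs : s ∈ Icc 0 T) (hsε : s + ε ≤ 1 / C) :
    η s < (C * (s + ε)) ^ p := by
  have hsub : Icc 0 s ⊆ Icc 0 T := Icc_subset_Icc_right hs.2
  have he₀ : 0 ≤ 1 - 1/p := sub_nonneg.2 ((div_le_one (by linarith)).2 hp)
  have he₁ : 1 - 1/p ≤ 1 := sub_le_self _ (by positivity)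
  have hbase : ∀ x ∈ Icc 0 s, 0 < C * (x + ε) ∧ C * (x + ε) ≤ 1 := fun x hx =>
    ⟨mul_pos hC (by linarith [hx.1]), by
      have := (le_div_iff₀ hC).1 (show x + ε ≤ 1 / C by linarith [hx.2]); linarith⟩
  have hη0 : η 0 ≤ 0 := by simpa using hineq 0 ⟨le_rfl, hs.1.trans hs.2⟩
  refine image_lt_of_sub_le_integral_of_hasDerivAt (hη.mono hsub) ?_
    (g := fun τ => C * p * max (η τ ^ (1 - 1/p)) (η τ))
    (φ := fun x => (C * (x + ε)) ^ p) (φ' := fun x => C * p * (C * (x + ε)) ^ (p - 1))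
    (fun x hx => ?_) ?_ (fun t ht => ?_) ?_ (fun x hx hlt => ?_) s (right_mem_Icc.2 hs.1)
  · refine ContinuousOn.intervalIntegrable ?_
    rw [uIcc_of_le hs.1]
    exact continuousOn_const.mul
      (((hη.rpow_const fun _ _ => Or.inr he₀).sup hη).mono hsub)
  · convert (((hasDerivAt_id' x).add_const ε).const_mul C).rpow_const
      (p := p) (Or.inl (hbase x hx).1.ne') using 1
    ring
  · exact (continuous_const.mul
      ((continuous_const.mul (continuous_id.add continuous_const)).rpow_const
        fun _ => Or.inr (by linarith))).intervalIntegrable _ _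
  · exact (sub_le_self _ (hnonneg 0 ⟨le_rfl, hs.1.trans hs.2⟩)).trans (hineq t (hsub ht))
  · exact hη0.trans_lt (rpow_pos_of_pos (by positivity) p)
  · obtain ⟨hpos, hle⟩ := hbase x hx
    calc C * p * max (η x ^ (1 - 1/p)) (η x) ≤ C * p * ((C * (x + ε)) ^ p) ^ (1 - 1/p) :=
          mul_le_mul_of_nonneg_left (max_rpow_self_le_rpow (hnonneg x (hsub hx)) hlt.le
            (rpow_le_one hpos.le hle (by linarith)) he₀ he₁) (by positivity)
      _ = C * p * (C * (x + ε)) ^ (p - 1) := by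
          rw [← rpow_mul hpos.le]; congr 2; field_simp

theorem le_mul_rpow_of_le_integral (hC : 0 < C) (hp : 1 ≤ p)
    (hη : ContinuousOn η (Icc 0 T)) (hnonneg : ∀ t ∈ Icc 0 T, 0 ≤ η t)
    (hineq : ∀ t ∈ Icc 0 T, η t ≤ ∫ τ in 0..t, C * p * max (η τ ^ (1 - 1/p)) (η τ)) :
    ∀ t ∈ Icc 0 (min T (1 / C)), η t ≤ (C * t) ^ p := by
  rintro t ⟨ht₀, htm⟩
  have htT : t ≤ T := htm.trans (min_le_left _ _)
  have htC : t ≤ 1 / C := htm.trans (min_le_right _ _)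
  rcases ht₀.eq_or_lt with rfl | htpos
  · exact (by simpa using hineq 0 ⟨le_rfl, htT⟩ : η 0 ≤ 0).trans
      (rpow_nonneg (by simp) p)
  -- The barrier `(C (y + (t - y)))^p` is strict at every `y < t`; pass to the limit `y → t`.
  refine ContinuousWithinAt.closure_le (s := Ico 0 t) ?_
    ((hη t ⟨ht₀, htT⟩).mono fun y hy => ⟨hy.1, hy.2.le.trans htT⟩)
    continuousWithinAt_const fun y hy => ?_
  · rw [closure_Ico htpos.ne]; exact right_mem_Icc.2 ht₀
  · have := lt_mul_add_rpow_of_le_integral hC hp (sub_pos.2 hy.2) hη hnonneg hineq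
      ⟨hy.1, hy.2.le.trans htT⟩ (by linarith)
    rw [add_sub_cancel] at this
    exact this.le

end Osgood

theorem nonpos_of_forall_le_rpow_of_lt_one {x b q₀ : ℝ} (hb₀ : -1 < b) (hb₁ : b < 1)
    (h : ∀ q, q₀ ≤ q → x ≤ b ^ q) : x ≤ 0 :=
  ge_of_tendsto (tendsto_rpow_atTop_of_base_lt_one b hb₀ hb₁)
    ((eventually_ge_atTop q₀).mono h)

theorem osgood_uniqueness_bound_general (Chat T p : ℝ) (hChat : 0 < Chat) (hp : 2 ≤ p)
    (η : ℝ → ℝ) (hcont : ContinuousOn η (Set.Icc 0 T)) (h0 : η 0 = 0)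
    (hnonneg : ∀ t ∈ Set.Icc 0 T, 0 ≤ η t)
    (hineq : ∀ s t : ℝ, 0 ≤ s → s ≤ t → t ≤ T →
      η t - η s ≤ ∫ τ in s..t, Chat * p * max (η τ ^ (1 - 1/p)) (η τ)) :
    (∀ t ∈ Set.Icc 0 (min T (1/Chat)), η t ≤ (Chat * t) ^ p) ∧
    ((∀ q : ℝ, 2 ≤ q → ∀ s t : ℝ, 0 ≤ s → s ≤ t → t ≤ T →
        η t - η s ≤ ∫ τ in s..t, Chat * q * max (η τ ^ (1 - 1/q)) (η τ)) →
      ∀ t ∈ Set.Icc 0 (min T (1/(2*Chat))), η t = 0) := by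
  have integral_from_zero : ∀ q, (∀ s t : ℝ, 0 ≤ s → s ≤ t → t ≤ T →
      η t - η s ≤ ∫ τ in s..t, Chat * q * max (η τ ^ (1 - 1/q)) (η τ)) →
      ∀ t ∈ Icc 0 T, η t ≤ ∫ τ in 0..t, Chat * q * max (η τ ^ (1 - 1/q)) (η τ) :=
    fun q hq t ht => by simpa [h0] using hq 0 t le_rfl ht.1 ht.2
  refine ⟨le_mul_rpow_of_le_integral hChat (by linarith) hcont hnonneg
    (integral_from_zero p hineq), fun hall t ⟨ht₀, htm⟩ => ?_⟩
  have htT : t ≤ T := htm.trans (min_le_left _ _)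
  have hCt : Chat * t ≤ 1 / 2 := by
    have := (le_div_iff₀ (by positivity)).1 (htm.trans (min_le_right _ _)); linarith
  have ht : t ∈ Icc 0 (min T (1 / Chat)) :=
    ⟨ht₀, le_min htT ((le_div_iff₀ hChat).2 (by linarith))⟩
  refine le_antisymm (nonpos_of_forall_le_rpow_of_lt_one (q₀ := 2) (by nlinarith) (by linarith)
    fun q hq => le_mul_rpow_of_le_integral hChat (by linarith) hcont hnonneg
      (integral_from_zero q (hall q hq)) t ht) (hnonneg t ⟨ht₀, htT⟩)

/-- (Osgood-type uniqueness argument.) If `η ≥ 0` is continuous on `[0,T]`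
with `η 0 = 0` and satisfies the (integrated) differential inequality
`η t - η s ≤ ∫_s^t Chat p max (η^{1-1/p}) η` for a fixed `p ≥ 2`, then
`η t ≤ (Chat t)^p` on `[0, min T (1/Chat)]`; and if the inequality holds for every `p ≥ 2`,
then `η ≡ 0` on `[0, min T (1/(2Chat))]`. -/
theorem osgood_uniqueness_bound (Chat T p : ℝ) (hChat : 0 < Chat) (hT : 0 < T) (hp : 2 ≤ p)
    (η : ℝ → ℝ) (hcont : ContinuousOn η (Set.Icc 0 T)) (h0 : η 0 = 0)
    (hnonneg : ∀ t ∈ Set.Icc 0 T, 0 ≤ η t)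
    (hineq : ∀ s t : ℝ, 0 ≤ s → s ≤ t → t ≤ T →
      η t - η s ≤ ∫ τ in s..t, Chat * p * max (η τ ^ (1 - 1/p)) (η τ)) :
    (∀ t ∈ Set.Icc 0 (min T (1/Chat)), η t ≤ (Chat * t) ^ p) ∧
    ((∀ q : ℝ, 2 ≤ q → ∀ s t : ℝ, 0 ≤ s → s ≤ t → t ≤ T →
        η t - η s ≤ ∫ τ in s..t, Chat * q * max (η τ ^ (1 - 1/q)) (η τ)) →
      ∀ t ∈ Set.Icc 0 (min T (1/(2*Chat))), η t = 0) :=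
  osgood_uniqueness_bound_general Chat T p hChat hp η hcont h0 hnonneg hineq
end

section
/- Let $p > 1$, $m^\star > 1$ with $m^\star = (p+1)/p$, $\overline{A} > 0$, $c > 0$, $M > 0$, and $M_c = \left(\frac{2\overline{A}}{(m^\star - 1) C c}\right)^{1/(2-m^\star)}$, where $C > 0$ is a fixed constant. Suppose $h \in L^1 \cap L^{m^\star}(\mathbb{R}^d)$ is nonnegative, nonzero, with finite second moment, and satisfies $\iint h(x)h(y)|x-y|^{-d/p}dxdy \ge \theta C \|h\|_1^{2-m^\star}\|h\|_{m^\star}^{m^\star}$ for some $\theta \in ((M_c/M)^{2-m^\star}, 1)$. Then with $\mu = (\|h\|_1/M)^{1/d}$ and $h_\lambda(x) = \lambda^d h(\lambda \mu x)$, the functional $E(v) = \frac{\overline{A}}{m^\star - 1}\int v^{m^\star}dx - \frac{c}{2}\iint v(x)v(y)|x-y|^{-d/p}dxdy$ satisfies $E(h_\lambda) \to -\infty$ as $\lambda \to \infty$, while $\|h_\lambda\|_1 = M$ for all $\lambda$. -/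
open MeasureTheory Filter

/-!
Under `h_λ(x) = λ^d h(λμx)` the mass is fixed while, because `m⋆ - 1 = 1/p`, the entropy
`∫ h_λ^{m⋆}` and the interaction `∬ h_λ h_λ |x-y|^{-d/p}` both pick up the same factor `λ^{d/p}`.
Hence `E(h_λ) = λ^{d/p} E(h_1)`, and the near-saturation of the HLS inequality by `h`, together
with `θ M^{2-m⋆} > M_c^{2-m⋆} = 2Ā/((m⋆-1)Cc)`, makes the aggregation term win: `E(h_1) < 0`.
-/

section Dilation

variable {E : Type*} [NormedAddCommGroup E] [NormedSpace ℝ E] [FiniteDimensional ℝ E]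
  [MeasurableSpace E] [BorelSpace E] (μ : Measure E) [μ.IsAddHaarMeasure]

def massDilation (n : ℕ) (ν lam : ℝ) (f : E → ℝ) (x : E) : ℝ :=
  lam ^ n * f ((lam * ν) • x)

variable {n : ℕ} (f : E → ℝ) {ν lam : ℝ}

theorem integral_massDilation (hn : Module.finrank ℝ E = n) (hν : 0 < ν) (hlam : 0 < lam) :
    ∫ x, massDilation n ν lam f x ∂μ = (ν ^ n)⁻¹ * ∫ x, f x ∂μ := by
  simp only [massDilation]
  rw [integral_const_mul,
    Measure.integral_comp_smul_of_nonneg μ f _ (hR := by positivity), hn, smul_eq_mul, mul_pow]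
  field_simp

theorem integral_rpow_massDilation (hn : Module.finrank ℝ E = n) (hν : 0 < ν) (hlam : 0 < lam)
    (hf : 0 ≤ f) (m : ℝ) :
    ∫ x, massDilation n ν lam f x ^ m ∂μ =
      lam ^ ((n : ℝ) * (m - 1)) * (ν ^ n)⁻¹ * ∫ x, f x ^ m ∂μ := by
  have hsplit : ∀ x, massDilation n ν lam f x ^ m =
      lam ^ ((n : ℝ) * (m - 1)) * massDilation n ν lam (fun y => f y ^ m) x := by
    intro x
    rw [massDilation, massDilation, Real.mul_rpow (by positivity) (hf _), ← Real.rpow_natCast,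
      ← Real.rpow_mul hlam.le, ← mul_assoc, ← Real.rpow_add hlam]
    ring_nf
  simp_rw [hsplit]
  rw [integral_const_mul, integral_massDilation μ _ hn hν hlam, mul_assoc]

theorem integral_interaction_massDilation (hn : Module.finrank ℝ E = n) (hν : 0 < ν)
    (hlam : 0 < lam) (k : ℝ) :
    ∫ z : E × E, massDilation n ν lam f z.1 * massDilation n ν lam f z.2 *
        ‖z.1 - z.2‖ ^ k ∂μ.prod μ =
      lam ^ (-k) * ν ^ (-k) * ((ν ^ n)⁻¹) ^ 2 *
        ∫ z : E × E, f z.1 * f z.2 * ‖z.1 - z.2‖ ^ k ∂μ.prod μ := by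
  have ha : 0 < lam * ν := by positivity
  have hsplit : ∀ z : E × E, massDilation n ν lam f z.1 * massDilation n ν lam f z.2 *
        ‖z.1 - z.2‖ ^ k = (lam * ν) ^ (-k) *
        massDilation (n + n) ν lam (fun w : E × E => f w.1 * f w.2 * ‖w.1 - w.2‖ ^ k) z := by
    intro z
    simp only [massDilation, Prod.smul_fst, Prod.smul_snd, ← smul_sub, norm_smul,
      Real.norm_of_nonneg ha.le, Real.mul_rpow ha.le (norm_nonneg _)]
    have hcancel : (lam * ν) ^ (-k) * (lam * ν) ^ k = 1 := by
      rw [← Real.rpow_add ha, neg_add_cancel, Real.rpow_zero]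
    linear_combination (lam ^ n * f ((lam * ν) • z.1) * (lam ^ n * f ((lam * ν) • z.2)) *
        ‖z.1 - z.2‖ ^ k) * hcancel.symm
  have hn2 : Module.finrank ℝ (E × E) = n + n := by rw [Module.finrank_prod, hn]
  simp_rw [hsplit]
  rw [integral_const_mul, integral_massDilation (μ.prod μ) _ hn2 hν hlam,
    Real.mul_rpow hlam.le hν.le]
  ring

theorem freeEnergy_massDilation (hn : Module.finrank ℝ E = n) (hν : 0 < ν) (hlam : 0 < lam)
    (hf : 0 ≤ f) {A c p m : ℝ} (hm : m - 1 = 1 / p) :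
    A * ∫ x, massDilation n ν lam f x ^ m ∂μ -
        c / 2 * ∫ z : E × E, massDilation n ν lam f z.1 * massDilation n ν lam f z.2 *
          ‖z.1 - z.2‖ ^ (-(n : ℝ) / p) ∂μ.prod μ =
      lam ^ ((n : ℝ) / p) * (A * (ν ^ n)⁻¹ * ∫ x, f x ^ m ∂μ -
        c / 2 * (ν ^ ((n : ℝ) / p) * ((ν ^ n)⁻¹) ^ 2 *
          ∫ z : E × E, f z.1 * f z.2 * ‖z.1 - z.2‖ ^ (-(n : ℝ) / p) ∂μ.prod μ)) := by
  rw [integral_rpow_massDilation μ f hn hν hlam hf,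
    integral_interaction_massDilation μ f hn hν hlam, hm, neg_div, neg_neg, mul_one_div]
  ring

end Dilation

theorem MeasureTheory.MemLp.integrable_rpow_of_nonneg {α : Type*} [MeasurableSpace α]
    {μ : Measure α} {f : α → ℝ} (hf : 0 ≤ f) {m : ℝ} (hm : 0 < m)
    (hfm : MemLp f (ENNReal.ofReal m) μ) : Integrable (fun x => f x ^ m) μ := by
  have := hfm.integrable_norm_rpow (by simpa using hm) ENNReal.ofReal_ne_top
  simpa [ENNReal.toReal_ofReal hm.le, Real.norm_of_nonneg (hf _)] using this

theorem integral_rpow_pos_of_integral_pos {α : Type*} [MeasurableSpace α] {μ : Measure α}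
    {f : α → ℝ} (hf : 0 ≤ f) (hfi : Integrable f μ) (hpos : 0 < ∫ x, f x ∂μ) {m : ℝ}
    (hm : m ≠ 0) (hfm : Integrable (fun x => f x ^ m) μ) : 0 < ∫ x, f x ^ m ∂μ := by
  rw [integral_pos_iff_support_of_nonneg hf hfi] at hpos
  rw [integral_pos_iff_support_of_nonneg (fun x => Real.rpow_nonneg (hf x) m) hfm]
  convert hpos using 2
  ext x
  simp [Real.rpow_eq_zero_iff_of_nonneg (hf x), hm]

theorem div_lt_of_critical_mass_div_rpow_lt {A k C c M θ γ : ℝ} (hA : 0 < A) (hk : 0 < k)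
    (hC : 0 < C) (hc : 0 < c) (hM : 0 < M) (hγ : γ ≠ 0)
    (hθ : ((2 * A / (k * C * c)) ^ (1 / γ) / M) ^ γ < θ) : A / k < c / 2 * (θ * C * M ^ γ) := by
  rw [Real.div_rpow (by positivity) hM.le, ← Real.rpow_mul (by positivity), one_div_mul_cancel hγ,
    Real.rpow_one, div_lt_iff₀ (by positivity), div_lt_iff₀ (by positivity)] at hθ
  rw [div_lt_iff₀ hk]
  linarith

theorem entropy_sub_interaction_neg {A c θ C M γ I₁ J I : ℝ} (hc : 0 < c) (hM : 0 < M)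
    (hI₁ : 0 < I₁) (hJ : 0 < J) (hcoef : A < c / 2 * (θ * C * M ^ γ))
    (hlow : θ * C * I₁ ^ γ * J ≤ I) :
    A * J - c / 2 * ((M / I₁) ^ γ * I) < 0 := by
  have hscale : (M / I₁) ^ γ * (θ * C * I₁ ^ γ * J) = θ * C * M ^ γ * J := by
    rw [Real.div_rpow hM.le hI₁.le]
    field_simp
  have : θ * C * M ^ γ * J ≤ (M / I₁) ^ γ * I := by
    rw [← hscale]
    exact mul_le_mul_of_nonneg_left hlow (by positivity)
  nlinarith

theorem freeEnergy_massDilation_coeff_neg {n : ℕ} {A c p M ν I₁ J I : ℝ} (hM : 0 < M)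
    (hI₁ : 0 < I₁) (hν : 0 < ν) (hνn : ν ^ n = I₁ / M)
    (hneg : A * J - c / 2 * ((M / I₁) ^ (1 - 1 / p) * I) < 0) :
    A * (ν ^ n)⁻¹ * J - c / 2 * (ν ^ ((n : ℝ) / p) * ((ν ^ n)⁻¹) ^ 2 * I) < 0 := by
  have hνp : ν ^ ((n : ℝ) / p) = ((M / I₁) ^ (1 / p))⁻¹ := by
    rw [div_eq_mul_one_div, Real.rpow_mul hν.le, Real.rpow_natCast, hνn, ← inv_div,
      Real.inv_rpow (by positivity)]
  calc _ = M / I₁ * (A * J - c / 2 * ((M / I₁) ^ (1 - 1 / p) * I)) := by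
        rw [hνp, hνn, Real.rpow_sub (by positivity), Real.rpow_one]
        field_simp
    _ < 0 := mul_neg_of_pos_of_neg (div_pos hM hI₁) hneg

theorem critical_free_energy_unbounded_general {d : ℕ} (hd : 1 ≤ d)
    (p Abar c M C θ : ℝ) (hp : 1 < p) (hAbar : 0 < Abar) (hc : 0 < c) (hM : 0 < M)
    (hC : 0 < C) (mstar : ℝ) (hmstar : mstar = (p+1)/p)
    (Mc : ℝ) (hMc : Mc = (2*Abar / ((mstar - 1) * C * c)) ^ ((1:ℝ)/(2 - mstar)))
    (h : EuclideanSpace ℝ (Fin d) → ℝ) (hnn : ∀ x, 0 ≤ h x)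
    (hL1 : Integrable h volume) (hL1pos : 0 < ∫ x, h x)
    (hLm : MemLp h (ENNReal.ofReal mstar) volume)
    (hθlow : (Mc/M) ^ (2 - mstar) < θ)
    (hlow : θ * C * (∫ x, h x) ^ (2 - mstar) * (∫ x, h x ^ mstar) ≤
      ∫ z : EuclideanSpace ℝ (Fin d) × EuclideanSpace ℝ (Fin d),
        h z.1 * h z.2 * ‖z.1 - z.2‖ ^ (-(d:ℝ)/p))
    (μ : ℝ) (hμ : μ = ((∫ x, h x) / M) ^ ((1:ℝ)/(d:ℝ)))
    (hlam : ℝ → EuclideanSpace ℝ (Fin d) → ℝ)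
    (hhlam : ∀ lam x, hlam lam x = lam ^ (d:ℕ) * h ((lam * μ) • x))
    (En : (EuclideanSpace ℝ (Fin d) → ℝ) → ℝ)
    (hEn : ∀ v, En v = Abar/(mstar - 1) * (∫ x, v x ^ mstar) -
      c/2 * ∫ z : EuclideanSpace ℝ (Fin d) × EuclideanSpace ℝ (Fin d),
        v z.1 * v z.2 * ‖z.1 - z.2‖ ^ (-(d:ℝ)/p)) :
    Tendsto (fun lam => En (hlam lam)) atTop atBot ∧
    ∀ lam > (0:ℝ), (∫ x, hlam lam x) = M := by
  set I₁ := ∫ x, h x with hI₁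
  set J := ∫ x, h x ^ mstar
  have hp₀ : 0 < p := by linarith
  have hm₁ : mstar - 1 = 1 / p := by rw [hmstar]; field_simp; ring
  have hm_gt : 1 < mstar := by linarith [one_div_pos.2 hp₀]
  have hm_lt : mstar < 2 := by linarith [(div_lt_one hp₀).2 hp]
  have hμ₀ : 0 < μ := hμ ▸ by positivity
  have hμd : μ ^ d = I₁ / M := by
    rw [hμ, one_div, Real.rpow_inv_natCast_pow (by positivity) (by omega)]
  have hdil : ∀ lam, hlam lam = massDilation d μ lam h := fun lam => funext (hhlam lam)
  have hdim : Module.finrank ℝ (EuclideanSpace ℝ (Fin d)) = d := finrank_euclideanSpace_fin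
  have hJ₀ : 0 < J := integral_rpow_pos_of_integral_pos hnn hL1 hL1pos (by linarith)
    (hLm.integrable_rpow_of_nonneg hnn (by linarith))
  have hbracket := entropy_sub_interaction_neg hc hM hL1pos hJ₀
    (div_lt_of_critical_mass_div_rpow_lt hAbar (by linarith) hC hc hM (by linarith)
      (hMc ▸ hθlow)) hlow
  have hm₂ : 2 - mstar = 1 - 1 / p := by linarith
  have hB := freeEnergy_massDilation_coeff_neg hM hL1pos hμ₀ hμd (hm₂ ▸ hbracket)
  refine ⟨?_, fun lam hl => ?_⟩
  · refine ((tendsto_rpow_atTop (y := (d : ℝ) / p) (by positivity)).atTop_mul_const_of_neg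
      hB).congr' ?_
    filter_upwards [eventually_gt_atTop 0] with lam hl
    rw [hEn, hdil]
    exact (freeEnergy_massDilation volume h hdim hμ₀ hl hnn hm₁).symm
  · rw [hdil, integral_massDilation volume h hdim hμ₀ hl, ← hI₁, hμd]
    field_simp

/-- (Free energy unbounded below at supercritical mass, critical case.)
With `m⋆ = (p+1)/p`, `M_c = (2Ā/((m⋆-1)Cc))^{1/(2-m⋆)}`, a nonnegative `h ∈ L¹ ∩ L^{m⋆}`
with finite second moment whose interaction integral nearly saturates the HLS constant
(`θ ∈ ((M_c/M)^{2-m⋆}, 1)`), the mass-`M` dilations `h_λ(x) = λ^d h(λμx)` satisfy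
`E(h_λ) → -∞` while `‖h_λ‖₁ = M`. -/
theorem critical_free_energy_unbounded {d : ℕ} (hd : 1 ≤ d)
    (p Abar c M C θ : ℝ) (hp : 1 < p) (hAbar : 0 < Abar) (hc : 0 < c) (hM : 0 < M)
    (hC : 0 < C) (mstar : ℝ) (hmstar : mstar = (p+1)/p)
    (Mc : ℝ) (hMc : Mc = (2*Abar / ((mstar - 1) * C * c)) ^ ((1:ℝ)/(2 - mstar)))
    (h : EuclideanSpace ℝ (Fin d) → ℝ) (hnn : ∀ x, 0 ≤ h x)
    (hL1 : Integrable h volume) (hL1pos : 0 < ∫ x, h x)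
    (hLm : MemLp h (ENNReal.ofReal mstar) volume)
    (hmom : Integrable (fun x => ‖x‖^2 * h x) volume)
    (hθlow : (Mc/M) ^ (2 - mstar) < θ) (hθ1 : θ < 1)
    (hint : Integrable (fun z : EuclideanSpace ℝ (Fin d) × EuclideanSpace ℝ (Fin d) =>
      h z.1 * h z.2 * ‖z.1 - z.2‖ ^ (-(d:ℝ)/p)) volume)
    (hlow : θ * C * (∫ x, h x) ^ (2 - mstar) * (∫ x, h x ^ mstar) ≤
      ∫ z : EuclideanSpace ℝ (Fin d) × EuclideanSpace ℝ (Fin d),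
        h z.1 * h z.2 * ‖z.1 - z.2‖ ^ (-(d:ℝ)/p))
    (μ : ℝ) (hμ : μ = ((∫ x, h x) / M) ^ ((1:ℝ)/(d:ℝ)))
    (hlam : ℝ → EuclideanSpace ℝ (Fin d) → ℝ)
    (hhlam : ∀ lam x, hlam lam x = lam ^ (d:ℕ) * h ((lam * μ) • x))
    (En : (EuclideanSpace ℝ (Fin d) → ℝ) → ℝ)
    (hEn : ∀ v, En v = Abar/(mstar - 1) * (∫ x, v x ^ mstar) -
      c/2 * ∫ z : EuclideanSpace ℝ (Fin d) × EuclideanSpace ℝ (Fin d),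
        v z.1 * v z.2 * ‖z.1 - z.2‖ ^ (-(d:ℝ)/p)) :
    Tendsto (fun lam => En (hlam lam)) atTop atBot ∧
    ∀ lam > (0:ℝ), (∫ x, hlam lam x) = M :=
  critical_free_energy_unbounded_general hd p Abar c M C θ hp hAbar hc hM hC mstar hmstar Mc hMc h
    hnn hL1 hL1pos hLm hθlow hlow μ hμ hlam hhlam En hEn
end

section
/- Let $F \in C^2([0,\infty))$ be convex with $F(0) = 0$ and $F'' > 0$ on $(0,\infty)$. Let $M > 0$ and let $f_n, f: D \to [0, M]$ be measurable functions on a bounded measurable set $D \subset \mathbb{R}^d$ such that $f_n \rightharpoonup f$ weakly in $L^1(D)$ and $\int_D F(f_n)\,dx \to \int_D F(f)\,dx$. Then $\|f_n - f\|_{L^2(D)} \to 0$. -/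
open MeasureTheory Set Filter

/-!
For the Bregman divergence `B(a, b) = F a - F b - F' b * (a - b)`, strict convexity and compactness
of `[0, M]²` give `(a - b)² ≤ ε + C_ε * B(a, b)` for every `ε > 0`. Integrated at `a = f n`,
`b = flim`, the integral of `B` is the energy gap `∫ F (f n) - ∫ F flim` minus
`∫ (f n - flim) * F' flim`; both tend to zero, the second by weak convergence tested against the
bounded function `F' ∘ flim`.
-/

theorem strictConvexOn_of_derivWithin2_pos {D : Set ℝ} (hD : Convex ℝ D) {f : ℝ → ℝ}
    (hf : ContinuousOn f D) (hf'' : ∀ x ∈ interior D, 0 < derivWithin (derivWithin f D) D x) :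
    StrictConvexOn ℝ D f := by
  refine strictConvexOn_of_deriv2_pos hD hf fun x hx => ?_
  have hderiv : derivWithin f D =ᶠ[nhds x] deriv f :=
    mem_of_superset (isOpen_interior.mem_nhds hx) fun y hy =>
      derivWithin_of_mem_nhds (mem_interior_iff_mem_nhds.1 hy)
  rw [Function.iterate_succ_apply, Function.iterate_one, ← hderiv.deriv_eq,
    ← derivWithin_of_mem_nhds (mem_interior_iff_mem_nhds.1 hx)]
  exact hf'' x hx

theorem ContinuousOn.exists_continuous_bounded_eqOn_Icc {a b : ℝ} (hab : a ≤ b) {g : ℝ → ℝ}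
    (hg : ContinuousOn g (Icc a b)) :
    ∃ φ : ℝ → ℝ, Continuous φ ∧ EqOn φ g (Icc a b) ∧ ∃ B, ∀ y, |φ y| ≤ B := by
  obtain ⟨B, hB⟩ := isCompact_Icc.exists_bound_of_continuousOn hg
  refine ⟨IccExtend hab ((Icc a b).domRestrict g), continuous_IccExtend_iff.2 hg.domRestrict,
    fun y hy => IccExtend_of_mem _ _ hy, B, fun y => ?_⟩
  rw [IccExtend_apply]
  exact hB _ (projIcc a b hab y).2

theorem IsCompact.exists_le_add_mul {X : Type*} [TopologicalSpace X] [T2Space X] {K : Set X}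
    (hK : IsCompact K) {u v : X → ℝ} (hu : ContinuousOn u K) (hv : ContinuousOn v K)
    (hv0 : ∀ p ∈ K, 0 ≤ v p) (huv : ∀ p ∈ K, 0 < u p → 0 < v p) {ε : ℝ} (hε : 0 < ε) :
    ∃ C, ∀ p ∈ K, u p ≤ ε + C * v p := by
  have hL : IsCompact (K ∩ u ⁻¹' Ici ε) :=
    hK.of_isClosed_subset (hu.preimage_isClosed_of_isClosed hK.isClosed isClosed_Ici)
      inter_subset_left
  obtain ⟨δ, hδ, hδv⟩ := hL.exists_forall_le' (hv.mono inter_subset_left)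
    fun p hp => huv p hp.1 (hε.trans_le hp.2)
  obtain ⟨U, hU⟩ := hK.exists_bound_of_continuousOn hu
  have hC : 0 ≤ max U 0 / δ := div_nonneg (le_max_right _ _) hδ.le
  refine ⟨max U 0 / δ, fun p hp => ?_⟩
  by_cases hεp : ε ≤ u p
  · calc u p ≤ max U 0 := (le_abs_self _).trans ((hU p hp).trans (le_max_left _ _))
      _ = max U 0 / δ * δ := (div_mul_cancel₀ _ hδ.ne').symm
      _ ≤ ε + max U 0 / δ * v p := by
        nlinarith [mul_le_mul_of_nonneg_left (hδv p ⟨hp, hεp⟩) hC]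
  · nlinarith [mul_nonneg hC (hv0 p hp)]

def bregmanDiv (F F' : ℝ → ℝ) (a b : ℝ) : ℝ := F a - F b - F' b * (a - b)

section Bregman

variable {F F' : ℝ → ℝ} {s : Set ℝ}

theorem bregmanDiv_self (a : ℝ) : bregmanDiv F F' a a = 0 := by
  simp [bregmanDiv]

theorem bregmanDiv_eq_sub_sub (a b : ℝ) :
    bregmanDiv F F' a b = (F a - F b) - (a * F' b - b * F' b) := by
  unfold bregmanDiv; ring

theorem continuousOn_bregmanDiv (hF : ContinuousOn F s) (hF' : ContinuousOn F' s) :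
    ContinuousOn (fun p : ℝ × ℝ => bregmanDiv F F' p.1 p.2) (s ×ˢ s) :=
  ((hF.comp continuousOn_fst fun _ hp => hp.1).sub
    (hF.comp continuousOn_snd fun _ hp => hp.2)).sub
    ((hF'.comp continuousOn_snd fun _ hp => hp.2).mul (by fun_prop))

theorem StrictConvexOn.bregmanDiv_pos (hF : StrictConvexOn ℝ s F) {a b : ℝ} (ha : a ∈ s)
    (hb : b ∈ s) (hF' : HasDerivWithinAt F (F' b) s b) (hab : a ≠ b) :
    0 < bregmanDiv F F' a b := by
  rcases hab.lt_or_gt with hab | hab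
  · have := hF.slope_lt_of_hasDerivWithinAt ha hb hab hF'
    rw [slope_def_field, div_lt_iff₀ (sub_pos.2 hab)] at this
    unfold bregmanDiv; nlinarith
  · have := hF.lt_slope_of_hasDerivWithinAt hb ha hab hF'
    rw [slope_def_field, lt_div_iff₀ (sub_pos.2 hab)] at this
    unfold bregmanDiv; linarith

theorem StrictConvexOn.bregmanDiv_nonneg (hF : StrictConvexOn ℝ s F) {a b : ℝ} (ha : a ∈ s)
    (hb : b ∈ s) (hF' : HasDerivWithinAt F (F' b) s b) : 0 ≤ bregmanDiv F F' a b := by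
  rcases eq_or_ne a b with rfl | hab
  · rw [bregmanDiv_self]
  · exact (hF.bregmanDiv_pos ha hb hF' hab).le

theorem StrictConvexOn.exists_sq_sub_le_add_mul_bregmanDiv (hF : StrictConvexOn ℝ s F)
    (hs : IsCompact s) (hF' : ∀ b ∈ s, HasDerivWithinAt F (F' b) s b)
    (hF'c : ContinuousOn F' s) {ε : ℝ} (hε : 0 < ε) :
    ∃ C, ∀ a ∈ s, ∀ b ∈ s, (a - b) ^ 2 ≤ ε + C * bregmanDiv F F' a b := by
  obtain ⟨C, hC⟩ := (hs.prod hs).exists_le_add_mul (u := fun p => (p.1 - p.2) ^ 2)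
    (by fun_prop)
    (continuousOn_bregmanDiv (fun b hb => (hF' b hb).continuousWithinAt) hF'c)
    (fun p hp => hF.bregmanDiv_nonneg hp.1 hp.2 (hF' _ hp.2))
    (fun p hp hpos => hF.bregmanDiv_pos hp.1 hp.2 (hF' _ hp.2)
      (sub_ne_zero.1 (sq_pos_iff.1 hpos))) hε
  exact ⟨C, fun a ha b hb => hC (a, b) ⟨ha, hb⟩⟩

end Bregman

section Integral

variable {α : Type*} [MeasurableSpace α] {μ : Measure α}

theorem ContinuousOn.aestronglyMeasurable_comp_of_ae_mem {β : Type*} [TopologicalSpace β]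
    [MeasurableSpace β] [OpensMeasurableSpace β] {g : β → ℝ} {s : Set β}
    (hg : ContinuousOn g s) (hs : MeasurableSet s) {f : α → β} (hf : AEMeasurable f μ)
    (hfs : ∀ᵐ x ∂μ, f x ∈ s) : AEStronglyMeasurable (fun x => g (f x)) μ := by
  have hmap : (μ.map f).restrict s = μ.map f :=
    Measure.restrict_eq_self_of_ae_mem ((ae_map_iff hf hs).2 hfs)
  exact (hmap ▸ hg.aestronglyMeasurable hs).comp_aemeasurable hf

theorem ContinuousOn.integrable_comp_of_ae_mem [IsFiniteMeasure μ] {β : Type*}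
    [TopologicalSpace β] [T2Space β] [MeasurableSpace β] [OpensMeasurableSpace β] {g : β → ℝ}
    {s : Set β} (hs : IsCompact s) (hg : ContinuousOn g s) {f : α → β} (hf : AEMeasurable f μ)
    (hfs : ∀ᵐ x ∂μ, f x ∈ s) : Integrable (fun x => g (f x)) μ := by
  obtain ⟨C, hC⟩ := hs.exists_bound_of_continuousOn hg
  exact .of_bound (hg.aestronglyMeasurable_comp_of_ae_mem hs.isClosed.measurableSet hf hfs) C
    (hfs.mono fun x hx => hC _ hx)

theorem tendsto_integral_of_le_add_mul [IsFiniteMeasure μ] {u v : ℕ → α → ℝ}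
    (hu : ∀ n, 0 ≤ᵐ[μ] u n) (hv : ∀ n, Integrable (v n) μ)
    (hv0 : Tendsto (fun n => ∫ x, v n x ∂μ) atTop (nhds 0))
    (huv : ∀ ε > 0, ∃ C, ∀ n, u n ≤ᵐ[μ] fun x => ε + C * v n x) :
    Tendsto (fun n => ∫ x, u n x ∂μ) atTop (nhds 0) := by
  refine tendsto_order.2 ⟨fun a ha => Eventually.of_forall fun n =>
    ha.trans_le (integral_nonneg_of_ae (hu n)), fun a ha => ?_⟩
  set m := μ.real univ
  set ε := a / (m + 1)
  obtain ⟨C, hC⟩ := huv ε (by positivity)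
  have hlim : Tendsto (fun n => ε * m + C * ∫ x, v n x ∂μ) atTop (nhds (ε * m)) := by
    simpa using (hv0.const_mul C).const_add (ε * m)
  have hεm : ε * m < a := by
    rw [div_mul_eq_mul_div, div_lt_iff₀ (by positivity)]
    linarith
  filter_upwards [hlim.eventually_lt_const hεm] with n hn
  calc ∫ x, u n x ∂μ ≤ ∫ x, (ε + C * v n x) ∂μ :=
        integral_mono_of_nonneg (hu n) ((integrable_const _).add ((hv n).const_mul C)) (hC n)
    _ = ε * m + C * ∫ x, v n x ∂μ := by
        rw [integral_add (integrable_const _) ((hv n).const_mul C), integral_const,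
          integral_const_mul, smul_eq_mul, mul_comm]
    _ < a := hn

theorem StrictConvexOn.tendsto_integral_sq_sub_of_tendsto_integral [IsFiniteMeasure μ]
    {F φ : ℝ → ℝ} {s : Set ℝ} (hF : StrictConvexOn ℝ s F) (hs : IsCompact s)
    (hφF : ∀ b ∈ s, HasDerivWithinAt F (φ b) s b) (hφ : ContinuousOn φ s)
    {g : ℕ → α → ℝ} {h : α → ℝ} (hg : ∀ n, AEMeasurable (g n) μ) (hh : AEMeasurable h μ)
    (hgs : ∀ n, ∀ᵐ x ∂μ, g n x ∈ s) (hhs : ∀ᵐ x ∂μ, h x ∈ s)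
    (hweak : Tendsto (fun n => ∫ x, g n x * φ (h x) ∂μ) atTop (nhds (∫ x, h x * φ (h x) ∂μ)))
    (henergy : Tendsto (fun n => ∫ x, F (g n x) ∂μ) atTop (nhds (∫ x, F (h x) ∂μ))) :
    Tendsto (fun n => ∫ x, (g n x - h x) ^ 2 ∂μ) atTop (nhds 0) := by
  have hFc : ContinuousOn F s := fun b hb => (hφF b hb).continuousWithinAt
  have hint : ∀ k : ℝ × ℝ → ℝ, ContinuousOn k (s ×ˢ s) → ∀ n,
      Integrable (fun x => k (g n x, h x)) μ := fun k hk n =>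
    hk.integrable_comp_of_ae_mem (hs.prod hs) ((hg n).prodMk hh) ((hgs n).and hhs)
  have hFg n : Integrable (fun x => F (g n x)) μ :=
    hint _ (hFc.comp continuousOn_fst fun _ hp => hp.1) n
  have hFh : Integrable (fun x => F (h x)) μ :=
    hint _ (hFc.comp continuousOn_snd fun _ hp => hp.2) 0
  have hφg n : Integrable (fun x => g n x * φ (h x)) μ :=
    hint _ (continuousOn_fst.mul (hφ.comp continuousOn_snd fun _ hp => hp.2)) n
  have hφh : Integrable (fun x => h x * φ (h x)) μ :=
    hint _ (continuousOn_snd.mul (hφ.comp continuousOn_snd fun _ hp => hp.2)) 0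
  refine tendsto_integral_of_le_add_mul (v := fun n x => bregmanDiv F φ (g n x) (h x))
    (fun n => ae_of_all _ fun x => sq_nonneg _)
    (fun n => hint _ (continuousOn_bregmanDiv hFc hφ) n) ?_ fun ε hε => ?_
  · have hgap := (henergy.sub_const (∫ x, F (h x) ∂μ)).sub
      (hweak.sub_const (∫ x, h x * φ (h x) ∂μ))
    rw [sub_self, sub_self, sub_self] at hgap
    refine hgap.congr fun n => ?_
    simp only [bregmanDiv_eq_sub_sub]
    rw [← integral_sub (hFg n) hFh, ← integral_sub (hφg n) hφh]
    exact (integral_sub ((hFg n).sub hFh) ((hφg n).sub hφh)).symm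
  · obtain ⟨C, hC⟩ := hF.exists_sq_sub_le_add_mul_bregmanDiv hs hφF hφ hε
    exact ⟨C, fun n => ((hgs n).and hhs).mono fun x hx => hC _ hx.1 _ hx.2⟩

end Integral

theorem strong_L2_from_weak_and_energy_general {d : ℕ} (F : ℝ → ℝ)
    (hF : ContDiffOn ℝ 2 F (Set.Ici (0:ℝ)))
    (hF'' : ∀ z > (0:ℝ),
      0 < derivWithin (derivWithin F (Set.Ici (0:ℝ))) (Set.Ici (0:ℝ)) z)
    (D : Set (EuclideanSpace ℝ (Fin d))) (hD : MeasurableSet D)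
    (hDb : Bornology.IsBounded D) (M : ℝ) (hM : 0 < M)
    (f : ℕ → EuclideanSpace ℝ (Fin d) → ℝ) (flim : EuclideanSpace ℝ (Fin d) → ℝ)
    (hfm : ∀ n, Measurable (f n)) (hflm : Measurable flim)
    (hbd : ∀ n, ∀ x ∈ D, f n x ∈ Set.Icc 0 M) (hbd' : ∀ x ∈ D, flim x ∈ Set.Icc 0 M)
    (hweak : ∀ φ : EuclideanSpace ℝ (Fin d) → ℝ, Measurable φ → (∃ B, ∀ x, |φ x| ≤ B) →
      Tendsto (fun n => ∫ x in D, f n x * φ x) atTop (nhds (∫ x in D, flim x * φ x)))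
    (henergy : Tendsto (fun n => ∫ x in D, F (f n x)) atTop
      (nhds (∫ x in D, F (flim x)))) :
    Tendsto (fun n => ∫ x in D, (f n x - flim x) ^ 2) atTop (nhds 0) := by
  have hsub : Icc 0 M ⊆ Ici (0:ℝ) := Icc_subset_Ici_self
  have hFs : StrictConvexOn ℝ (Icc 0 M) F :=
    (strictConvexOn_of_derivWithin2_pos (convex_Ici 0) hF.continuousOn
      (by simpa using hF'')).subset hsub (convex_Icc 0 M)
  -- `hweak` only admits globally bounded test functions: extend `F'` from `[0, M]` to `ℝ`.
  obtain ⟨φ, hφc, hφF', B, hφB⟩ := ((hF.continuousOn_derivWithin (uniqueDiffOn_Ici 0)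
    (by norm_num)).mono hsub).exists_continuous_bounded_eqOn_Icc hM.le
  have hφF : ∀ b ∈ Icc 0 M, HasDerivWithinAt F (φ b) (Icc 0 M) b := fun b hb => by
    rw [hφF' hb]
    exact ((hF.differentiableOn (by norm_num) b (hsub hb)).hasDerivWithinAt).mono hsub
  have : IsFiniteMeasure (volume.restrict D) := isFiniteMeasure_restrict.2 hDb.measure_lt_top.ne
  exact hFs.tendsto_integral_sq_sub_of_tendsto_integral isCompact_Icc hφF hφc.continuousOn
    (fun n => (hfm n).aemeasurable) hflm.aemeasurable
    (fun n => ae_restrict_of_forall_mem hD (hbd n)) (ae_restrict_of_forall_mem hD hbd')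
    (hweak _ (hφc.measurable.comp hflm) ⟨B, fun x => hφB _⟩) henergy

/-- (Bertozzi–Slepčev.) If `F ∈ C²([0,∞))` is convex with `F(0)=0` and
`F'' > 0` on `(0,∞)`, `f_n, f : D → [0,M]` with `f_n ⇀ f` weakly in `L¹(D)` and
`∫ F(f_n) → ∫ F(f)`, then `f_n → f` strongly in `L²(D)`. -/
theorem strong_L2_from_weak_and_energy {d : ℕ} (F : ℝ → ℝ)
    (hF : ContDiffOn ℝ 2 F (Set.Ici (0:ℝ)))
    (hconv : ConvexOn ℝ (Set.Ici (0:ℝ)) F) (hF0 : F 0 = 0)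
    (hF'' : ∀ z > (0:ℝ),
      0 < derivWithin (derivWithin F (Set.Ici (0:ℝ))) (Set.Ici (0:ℝ)) z)
    (D : Set (EuclideanSpace ℝ (Fin d))) (hD : MeasurableSet D)
    (hDb : Bornology.IsBounded D) (M : ℝ) (hM : 0 < M)
    (f : ℕ → EuclideanSpace ℝ (Fin d) → ℝ) (flim : EuclideanSpace ℝ (Fin d) → ℝ)
    (hfm : ∀ n, Measurable (f n)) (hflm : Measurable flim)
    (hbd : ∀ n, ∀ x ∈ D, f n x ∈ Set.Icc 0 M) (hbd' : ∀ x ∈ D, flim x ∈ Set.Icc 0 M)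
    (hweak : ∀ φ : EuclideanSpace ℝ (Fin d) → ℝ, Measurable φ → (∃ B, ∀ x, |φ x| ≤ B) →
      Tendsto (fun n => ∫ x in D, f n x * φ x) atTop (nhds (∫ x in D, flim x * φ x)))
    (henergy : Tendsto (fun n => ∫ x in D, F (f n x)) atTop
      (nhds (∫ x in D, F (flim x)))) :
    Tendsto (fun n => ∫ x in D, (f n x - flim x) ^ 2) atTop (nhds 0) :=
  strong_L2_from_weak_and_energy_general F hF hF'' D hD hDb M hM f flim hfm hflm hbd hbd' hweak
    henergy
end
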